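/- arXiv:1612.03318 — 6 statements merged into one kernel-verified Lean document; each statement's English description precedes it below -/
import Mathlib

section
/- Let X be a topological space and 𝓑 a basis for the topology of X which is closed under finite unions. Then the family { B^◇ | B ∈ 𝓑 } ∪ { B^□ | B ∈ 𝓑 } is a subbasis for the compact Vietoris topology on the set of compact subsets of X. -/
/-- The compact Vietoris hyperspace topology: compact subsets of `X`,
topologized by the sets `U^□ = {K | K ⊆ U}` and `U^◇ = {K | K ∩ U ≠ ∅}`
for `U` open. -/
def compactVietoris (X : Type*) [TopologicalSpace X] :
    TopologicalSpace {K : Set X // IsCompact K} :=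
  TopologicalSpace.generateFrom
    ({s : Set {K : Set X // IsCompact K} |
        ∃ U : Set X, IsOpen U ∧ s = {K : {K : Set X // IsCompact K} | (K : Set X) ⊆ U}} ∪
     {s : Set {K : Set X // IsCompact K} |
        ∃ U : Set X, IsOpen U ∧ s = {K : {K : Set X // IsCompact K} | ((K : Set X) ∩ U).Nonempty}})

/-- If `𝓑` is a basis of `X` closed under finite unions, then
`{B^◇ | B ∈ 𝓑} ∪ {B^□ | B ∈ 𝓑}` is a subbasis for the compact Vietoris
topology. -/
theorem stmt_6 {X : Type*} [TopologicalSpace X] (𝓑 : Set (Set X))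
    (h𝓑 : TopologicalSpace.IsTopologicalBasis 𝓑)
    (hunion : ∀ F : Set (Set X), F ⊆ 𝓑 → F.Finite → ⋃₀ F ∈ 𝓑) :
    TopologicalSpace.generateFrom
      ({s : Set {K : Set X // IsCompact K} |
          ∃ B ∈ 𝓑, s = {K : {K : Set X // IsCompact K} | ((K : Set X) ∩ B).Nonempty}} ∪
       {s : Set {K : Set X // IsCompact K} |
          ∃ B ∈ 𝓑, s = {K : {K : Set X // IsCompact K} | (K : Set X) ⊆ B}}) =
    compactVietoris X := by
  apply le_antisymm
  · -- generateFrom basis-family ≤ compactVietoris: every Vietoris generator is open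
    rw [compactVietoris]
    apply le_generateFrom
    rintro s (⟨U, hU, rfl⟩ | ⟨U, hU, rfl⟩)
    · -- U^□ : use compactness
      have : {K : {K : Set X // IsCompact K} | (K : Set X) ⊆ U} =
          ⋃ B ∈ {B | B ∈ 𝓑 ∧ B ⊆ U},
            {K : {K : Set X // IsCompact K} | (K : Set X) ⊆ B} := by
        ext K
        simp only [Set.mem_setOf_eq, Set.mem_iUnion, exists_prop]
        constructor
        · intro hK
          -- cover K by basis elements inside U
          obtain ⟨t, ht⟩ := K.2.elim_finite_subcover
            (fun B : {B // B ∈ 𝓑 ∧ B ⊆ U} => (B : Set X))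
            (fun B => h𝓑.isOpen B.2.1)
            (by
              intro x hx
              obtain ⟨B, hB, hxB, hBU⟩ := h𝓑.exists_subset_of_mem_open (hK hx) hU
              exact Set.mem_iUnion.2 ⟨⟨B, hB, hBU⟩, hxB⟩)
          refine ⟨⋃₀ ((fun B : {B // B ∈ 𝓑 ∧ B ⊆ U} => (B : Set X)) '' t), ⟨?_, ?_⟩, ?_⟩
          · exact hunion _ (by rintro _ ⟨B, -, rfl⟩; exact B.2.1)
              ((t.finite_toSet.image _))
          · rintro x ⟨_, ⟨B, -, rfl⟩, hxB⟩
            exact B.2.2 hxB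
          · intro x hx
            obtain ⟨B, hBt, hxB⟩ := Set.mem_iUnion₂.1 (ht hx)
            exact ⟨B, ⟨B, hBt, rfl⟩, hxB⟩
        · rintro ⟨B, ⟨hB, hBU⟩, hKB⟩
          exact hKB.trans hBU
      rw [this]
      rw [← Set.sUnion_image]
      exact TopologicalSpace.GenerateOpen.sUnion _
        (by rintro _ ⟨B, hB, rfl⟩
            exact TopologicalSpace.GenerateOpen.basic _ (Or.inr ⟨B, hB.1, rfl⟩))
    · -- U^◇
      have : {K : {K : Set X // IsCompact K} | ((K : Set X) ∩ U).Nonempty} =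
          ⋃ B ∈ {B | B ∈ 𝓑 ∧ B ⊆ U},
            {K : {K : Set X // IsCompact K} | ((K : Set X) ∩ B).Nonempty} := by
        ext K
        simp only [Set.mem_setOf_eq, Set.mem_iUnion, exists_prop]
        constructor
        · rintro ⟨x, hxK, hxU⟩
          obtain ⟨B, hB, hxB, hBU⟩ := h𝓑.exists_subset_of_mem_open hxU hU
          exact ⟨B, ⟨hB, hBU⟩, x, hxK, hxB⟩
        · rintro ⟨B, ⟨hB, hBU⟩, x, hxK, hxB⟩
          exact ⟨x, hxK, hBU hxB⟩
      rw [this]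
      rw [← Set.sUnion_image]
      exact TopologicalSpace.GenerateOpen.sUnion _
        (by rintro _ ⟨B, hB, rfl⟩
            exact TopologicalSpace.GenerateOpen.basic _ (Or.inl ⟨B, hB.1, rfl⟩))
  · -- compactVietoris ≤ generateFrom basis-family: each basis generator is a generator
    apply TopologicalSpace.generateFrom_anti
    rintro s (⟨B, hB, rfl⟩ | ⟨B, hB, rfl⟩)
    · exact Or.inr ⟨B, h𝓑.isOpen hB, rfl⟩
    · exact Or.inl ⟨B, h𝓑.isOpen hB, rfl⟩
end

section
/- Let D : I → CompHaus be a codirected diagram of compact Hausdorff spaces with limit cone (p_i : L → D(i)). Then for every i ∈ I, the image of p_i equals the intersection over all arrows j → i in I of the images of the connecting maps D(j → i) : D(j) → D(i). -/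
private lemma finset_lb {I : Type*} [PartialOrder I]
    (hcodir : ∀ i j : I, ∃ k : I, k ≤ i ∧ k ≤ j) (i : I) (s : Finset I) :
    ∃ m : I, m ≤ i ∧ ∀ j ∈ s, m ≤ j := by
  classical
  induction s using Finset.induction with
  | empty => exact ⟨i, le_refl i, by simp⟩
  | @insert a s ha ih =>
    obtain ⟨m, hmi, hms⟩ := ih
    obtain ⟨k, hkm, hka⟩ := hcodir m a
    exact ⟨k, hkm.trans hmi, by
      intro j hj
      rcases Finset.mem_insert.mp hj with rfl | hj
      · exact hka
      · exact hkm.trans (hms j hj)⟩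

theorem stmt_11 {I : Type*} [PartialOrder I] [Nonempty I]
    (hcodir : ∀ i j : I, ∃ k : I, k ≤ i ∧ k ≤ j)
    (D : I → Type*) [∀ i, TopologicalSpace (D i)]
    [∀ i, CompactSpace (D i)] [∀ i, T2Space (D i)]
    (d : ∀ {j i : I}, j ≤ i → D j → D i)
    (hcont : ∀ (j i : I) (h : j ≤ i), Continuous (d h))
    (hid : ∀ (i : I) (h : i ≤ i) (x : D i), d h x = x)
    (hcomp : ∀ (k j i : I) (hkj : k ≤ j) (hji : j ≤ i) (x : D k),
      d hji (d hkj x) = d (hkj.trans hji) x)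
    (i : I) :
    Set.range (fun x : {x : ∀ i, D i // ∀ (j i : I) (h : j ≤ i), d h (x j) = x i} =>
        x.1 i) =
      ⋂ (j : I) (h : j ≤ i), Set.range (d h) := by
  classical
  apply Set.Subset.antisymm
  · rintro _ ⟨x, rfl⟩
    simp only [Set.mem_iInter]
    intro j h
    exact ⟨x.1 j, x.2 j i h⟩
  · intro y hy
    simp only [Set.mem_iInter] at hy
    -- each D j is nonempty
    have hne : ∀ j : I, Nonempty (D j) := by
      intro j
      obtain ⟨k, hkj, hki⟩ := hcodir j i
      obtain ⟨w, -⟩ := hy k hki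
      exact ⟨d hkj w⟩
    -- the family of closed constraint sets
    set Z : I × I → Set (∀ j, D j) :=
      fun p => (⋂ h : p.1 ≤ p.2, {x | d h (x p.1) = x p.2}) ∩ {x | x i = y} with hZ
    have hZc : ∀ p, IsClosed (Z p) := by
      intro p
      refine IsClosed.inter (isClosed_iInter fun h => ?_)
        (isClosed_eq (continuous_apply i) continuous_const)
      exact isClosed_eq ((hcont _ _ h).comp (continuous_apply p.1)) (continuous_apply p.2)
    have hfin : ∀ t : Finset (I × I), (Set.univ ∩ ⋂ p ∈ t, Z p).Nonempty := by
      intro t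
      obtain ⟨m, hmi, hms⟩ := finset_lb hcodir i (t.image Prod.fst)
      obtain ⟨z, hz⟩ := hy m hmi
      refine ⟨fun j => if h : m ≤ j then d h z else Classical.choice (hne j), ?_⟩
      refine ⟨trivial, ?_⟩
      simp only [Set.mem_iInter, hZ, Set.mem_inter_iff, Set.mem_setOf_eq]
      intro p hp
      have hm1 : m ≤ p.1 := hms p.1 (Finset.mem_image_of_mem Prod.fst hp)
      constructor
      · intro h
        have hm2 : m ≤ p.2 := hm1.trans h
        simp only [dif_pos hm1, dif_pos hm2]
        exact hcomp _ _ _ hm1 h z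
      · simp only [dif_pos hmi]
        exact hz
    have hint := IsCompact.inter_iInter_nonempty isCompact_univ Z hZc hfin
    obtain ⟨x, -, hx⟩ := hint
    simp only [Set.mem_iInter, hZ, Set.mem_inter_iff, Set.mem_setOf_eq] at hx
    refine ⟨⟨x, fun j k h => (hx (j, k)).1 h⟩, (hx (i, i)).2⟩
end

section
/- Let D : I → CompHaus be a codirected diagram and (p_i : L → D(i)) a cone of compact Hausdorff spaces such that (i) the maps p_i are jointly injective and (ii) for every i, the image of p_i contains ⋂_{j→i} im D(j→i). Then (p_i) is a limit cone: for every compatible cone (f_i : X → D(i)) of continuous maps there is a unique continuous map f : X → L with p_i ∘ f = f_i for all i. -/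
theorem stmt_12 {I : Type*} [PartialOrder I] [Nonempty I]
    (hcodir : ∀ i j : I, ∃ k : I, k ≤ i ∧ k ≤ j)
    (D : I → Type*) [∀ i, TopologicalSpace (D i)]
    [∀ i, CompactSpace (D i)] [∀ i, T2Space (D i)]
    (d : ∀ {j i : I}, j ≤ i → D j → D i)
    (hcont : ∀ (j i : I) (h : j ≤ i), Continuous (d h))
    (hid : ∀ (i : I) (h : i ≤ i) (x : D i), d h x = x)
    (hcomp : ∀ (k j i : I) (hkj : k ≤ j) (hji : j ≤ i) (x : D k),
      d hji (d hkj x) = d (hkj.trans hji) x)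
    (L : Type*) [TopologicalSpace L] [CompactSpace L] [T2Space L]
    (p : ∀ i : I, L → D i)
    (hpcont : ∀ i : I, Continuous (p i))
    (hpcone : ∀ (j i : I) (h : j ≤ i) (x : L), d h (p j x) = p i x)
    (hmono : ∀ x y : L, (∀ i : I, p i x = p i y) → x = y)
    (him : ∀ i : I, (⋂ (j : I) (h : j ≤ i), Set.range (d h)) ⊆ Set.range (p i))
    (X : Type*) [TopologicalSpace X] [CompactSpace X] [T2Space X]
    (f : ∀ i : I, X → D i)
    (hfcont : ∀ i : I, Continuous (f i))
    (hfcone : ∀ (j i : I) (h : j ≤ i) (x : X), d h (f j x) = f i x) :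
    ∃! g : X → L, Continuous g ∧ ∀ (i : I) (x : X), p i (g x) = f i x := by
  -- the fiber sets
  set S : X → I → Set L := fun x i => {l | p i l = f i x} with hS
  have hclosed : ∀ x i, IsClosed (S x i) := fun x i =>
    isClosed_eq (hpcont i) continuous_const
  have hne : ∀ x i, (S x i).Nonempty := by
    intro x i
    have : f i x ∈ ⋂ (j : I) (h : j ≤ i), Set.range (d h) := by
      refine Set.mem_iInter₂.2 fun j h => ⟨f j x, hfcone j i h x⟩
    obtain ⟨l, hl⟩ := him i this
    exact ⟨l, hl⟩
  have hdir : ∀ x, Directed (· ⊇ ·) (S x) := by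
    intro x i j
    obtain ⟨k, hki, hkj⟩ := hcodir i j
    refine ⟨k, ?_, ?_⟩ <;> intro l hl
    · show p i l = f i x
      rw [← hpcone k i hki l, hl, hfcone k i hki x]
    · show p j l = f j x
      rw [← hpcone k j hkj l, hl, hfcone k j hkj x]
  have hT : ∀ x, (⋂ i, S x i).Nonempty := by
    intro x
    exact IsCompact.nonempty_iInter_of_directed_nonempty_isCompact_isClosed
      (S x) (hdir x) (hne x) (fun i => (hclosed x i).isCompact) (hclosed x)
  choose g hg using hT
  have hgS : ∀ x i, p i (g x) = f i x := by
    intro x i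
    exact Set.mem_iInter.1 (hg x) i
  -- the embedding into the product
  have hind : Topology.IsInducing (fun l (i : I) => p i l : L → ∀ i, D i) := by
    have hcontE : Continuous (fun l (i : I) => p i l : L → ∀ i, D i) :=
      continuous_pi fun i => hpcont i
    have hinj : Function.Injective (fun l (i : I) => p i l : L → ∀ i, D i) := by
      intro a b hab
      exact hmono a b fun i => congrFun hab i
    exact (hcontE.isClosedEmbedding hinj).isInducing
  have hgcont : Continuous g := by
    rw [hind.continuous_iff]
    have : ((fun l (i : I) => p i l) ∘ g) = fun x (i : I) => f i x := by
      funext x i; exact hgS x i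
    rw [this]
    exact continuous_pi fun i => hfcont i
  refine ⟨g, ⟨hgcont, fun i x => hgS x i⟩, ?_⟩
  rintro g' ⟨-, hg'⟩
  funext x
  exact hmono (g' x) (g x) fun i => by rw [hg' i x, hgS x i]
end

section
/- Let X be a partially ordered compact space (compact topology with closed order relation) and let 𝓐 be a family of closed subsets of X that is codirected under inclusion (any two members contain a common member). Then the down-closure of the intersection ⋂𝓐 equals the intersection of the down-closures: ↓(⋂_{A∈𝓐} A) = ⋂_{A∈𝓐} ↓A. -/
theorem stmt_13 {X : Type*} [TopologicalSpace X] [CompactSpace X] [PartialOrder X]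
    (hord : IsClosed {p : X × X | p.1 ≤ p.2})
    (𝓐 : Set (Set X)) (hclosed : ∀ A ∈ 𝓐, IsClosed A)
    (hne : 𝓐.Nonempty)
    (hcodir : ∀ A ∈ 𝓐, ∀ B ∈ 𝓐, ∃ C ∈ 𝓐, C ⊆ A ∧ C ⊆ B) :
    {z : X | ∃ s ∈ ⋂₀ 𝓐, z ≤ s} = ⋂ A ∈ 𝓐, {z : X | ∃ s ∈ A, z ≤ s} := by
  ext z
  simp only [Set.mem_setOf_eq, Set.mem_iInter]
  constructor
  · rintro ⟨s, hs, hzs⟩ A hA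
    exact ⟨s, hs A hA, hzs⟩
  · intro h
    have hup : IsClosed {s : X | z ≤ s} := by
      have : {s : X | z ≤ s} = (fun s => ((z, s) : X × X)) ⁻¹' {p : X × X | p.1 ≤ p.2} := rfl
      rw [this]
      exact hord.preimage (Continuous.prodMk_right z)
    haveI : Nonempty 𝓐 := hne.to_subtype
    set t : 𝓐 → Set X := fun A => (A : Set X) ∩ {s | z ≤ s} with ht
    have hN : (⋂ A, t A).Nonempty := by
      apply IsCompact.nonempty_iInter_of_directed_nonempty_isCompact_isClosed
      · rintro ⟨A, hA⟩ ⟨B, hB⟩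
        obtain ⟨C, hC, hCA, hCB⟩ := hcodir A hA B hB
        exact ⟨⟨C, hC⟩, Set.inter_subset_inter_left _ hCA,
          Set.inter_subset_inter_left _ hCB⟩
      · rintro ⟨A, hA⟩
        obtain ⟨s, hs, hzs⟩ := h A hA
        exact ⟨s, hs, hzs⟩
      · rintro ⟨A, hA⟩
        exact (((hclosed A hA).inter hup).isCompact)
      · rintro ⟨A, hA⟩
        exact (hclosed A hA).inter hup
    obtain ⟨s, hs⟩ := hN
    refine ⟨s, ?_, (Set.mem_iInter.1 hs ⟨_, hne.some_mem⟩).2⟩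
    intro A hA
    exact (Set.mem_iInter.1 hs ⟨A, hA⟩).1
end

section
/- For topological spaces X and Y, the map τ : V X × Y → V (X × Y) sending (S, y) to S × {y} is continuous, where V denotes the compact Vietoris hyperspace functor; moreover these maps are natural in X and Y. -/
theorem stmt_16 {X Y X' Y' : Type*} [TopologicalSpace X] [TopologicalSpace Y]
    [TopologicalSpace X'] [TopologicalSpace Y']
    (f : X → X') (g : Y → Y') (hf : Continuous f) (hg : Continuous g) :
    @Continuous ({K : Set X // IsCompact K} × Y) {K : Set (X × Y) // IsCompact K}
      (@instTopologicalSpaceProd _ _ (compactVietoris X) _) (compactVietoris (X × Y))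
      (fun p => ⟨(p.1 : Set X) ×ˢ ({p.2} : Set Y),
        p.1.2.prod isCompact_singleton⟩) ∧
    ∀ (S : Set X) (y : Y),
      Prod.map f g '' (S ×ˢ ({y} : Set Y)) = (f '' S) ×ˢ ({g y} : Set Y') := by
  constructor
  · letI tX := compactVietoris X
    letI tXY := compactVietoris (X × Y)
    apply continuous_generateFrom_iff.mpr
    rintro s (⟨U, hU, rfl⟩ | ⟨U, hU, rfl⟩)
    · rw [isOpen_iff_mem_nhds]
      rintro ⟨S, y⟩ h
      simp only [Set.mem_preimage, Set.mem_setOf_eq] at h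
      obtain ⟨V, W, hV, hW, hSV, hyW, hVW⟩ :=
        generalized_tube_lemma S.2 isCompact_singleton hU h
      rw [mem_nhds_iff]
      refine ⟨{K : {K : Set X // IsCompact K} | (K : Set X) ⊆ V} ×ˢ W, ?_, ?_, ?_⟩
      · rintro ⟨K, y'⟩ ⟨hK, hy'⟩
        simp only [Set.mem_preimage, Set.mem_setOf_eq]
        exact (Set.prod_mono hK (Set.singleton_subset_iff.mpr hy')).trans hVW
      · exact IsOpen.prod (TopologicalSpace.GenerateOpen.basic _ (Or.inl ⟨V, hV, rfl⟩)) hW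
      · exact ⟨hSV, hyW (Set.mem_singleton y)⟩
    · rw [isOpen_iff_mem_nhds]
      rintro ⟨S, y⟩ h
      simp only [Set.mem_preimage, Set.mem_setOf_eq] at h
      obtain ⟨⟨x, y₀⟩, ⟨hxS, hy0⟩, hU'⟩ := h
      obtain rfl : y₀ = y := hy0
      obtain ⟨V, W, hV, hW, hxV, hyW, hVW⟩ := isOpen_prod_iff.mp hU x y₀ hU'
      rw [mem_nhds_iff]
      refine ⟨{K : {K : Set X // IsCompact K} | ((K : Set X) ∩ V).Nonempty} ×ˢ W, ?_, ?_, ?_⟩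
      · rintro ⟨K, y'⟩ ⟨⟨x', hx'K, hx'V⟩, hy'⟩
        exact ⟨(x', y'), ⟨⟨hx'K, rfl⟩, hVW ⟨hx'V, hy'⟩⟩⟩
      · exact IsOpen.prod (TopologicalSpace.GenerateOpen.basic _ (Or.inr ⟨V, hV, rfl⟩)) hW
      · exact ⟨⟨x, hxS, hxV⟩, hyW⟩
  · intro S y
    rw [← Set.image_singleton (f := g) (a := y), Set.prod_image_image_eq]
    rfl
end

section
/- Let C be a category with a terminal object 1, F : C → C a functor, and suppose the codirected (ω^op) diagram 1 ← F1 ← F²1 ← ⋯ (with connecting maps obtained by applying F to the unique map F1 → 1) has a limit L which is preserved by F. Then the canonical comparison map L → F L is an isomorphism and equips L with the structure of a final F-coalgebra: for every coalgebra c : X → F X there is a unique morphism h : X → L with (L → F L understood as structure) F h ∘ c = (structure of L) ∘ h. -/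
/-!
The comparison map `l : L ⟶ F L` is the map induced by the shifted cone `p (n + 1)` through the
preserved limit `F L`; its inverse is induced by the cone `F (p n)` on `L`, extended at level `0`
by composing with `t`. A coalgebra `c : X ⟶ F X` gives the cone of iterates `X ⟶ Fⁿ T`, starting
from the unique map `X ⟶ T` and continuing by `c ≫ F(-)`, and any coalgebra map `h : X ⟶ L`
composed with `p n` is forced, by induction on `n`, to be that cone; so coalgebra maps into `L`
are exactly the maps induced by it.
-/

open CategoryTheory

universe v u

variable {C : Type u} [Category.{v} C]

/-- The objects `Fⁿ(1)` of the chain `1 ← F1 ← F²1 ← ⋯`. -/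
def chainObj (F : C ⥤ C) (T : C) : ℕ → C
  | 0 => T
  | n + 1 => F.obj (chainObj F T n)

/-- The connecting maps of the chain `1 ← F1 ← F²1 ← ⋯`, obtained by iterated
application of `F` to the (unique) map `t : F1 ⟶ 1`. -/
def chainMap (F : C ⥤ C) (T : C) (t : F.obj T ⟶ T) :
    ∀ n : ℕ, chainObj F T (n + 1) ⟶ chainObj F T n
  | 0 => t
  | n + 1 => F.map (chainMap F T t n)

open Limits

section Tower

variable {D : ℕ → C} (d : ∀ n, D (n + 1) ⟶ D n)

def IsTowerCone {X : C} (q : ∀ n, X ⟶ D n) : Prop :=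
  ∀ n, q (n + 1) ≫ d n = q n

def IsTowerLimit {L : C} (p : ∀ n, L ⟶ D n) : Prop :=
  ∀ (X : C) (q : ∀ n, X ⟶ D n), IsTowerCone d q → ∃! m : X ⟶ L, ∀ n, m ≫ p n = q n

def towerExtend {X : C} (q : ∀ n, X ⟶ D (n + 1)) : ∀ n, X ⟶ D n
  | 0 => q 0 ≫ d 0
  | n + 1 => q n

variable {d}

namespace IsTowerCone

theorem succ {X : C} {q : ∀ n, X ⟶ D n} (hq : IsTowerCone d q) :
    IsTowerCone (fun n => d (n + 1)) (fun n => q (n + 1)) :=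
  fun n => hq (n + 1)

theorem precomp {X Y : C} {q : ∀ n, X ⟶ D n} (hq : IsTowerCone d q) (f : Y ⟶ X) :
    IsTowerCone d (fun n => f ≫ q n) :=
  fun n => by rw [Category.assoc, hq n]

theorem map {E : Type*} [Category E] (F : C ⥤ E) {X : C} {q : ∀ n, X ⟶ D n}
    (hq : IsTowerCone d q) :
    IsTowerCone (D := fun n => F.obj (D n)) (fun n => F.map (d n)) (fun n => F.map (q n)) :=
  fun n => by rw [← F.map_comp, hq n]

theorem towerExtend {X : C} {q : ∀ n, X ⟶ D (n + 1)} (hq : IsTowerCone (fun n => d (n + 1)) q) :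
    IsTowerCone d (towerExtend d q)
  | 0 => rfl
  | n + 1 => hq n

end IsTowerCone

namespace IsTowerLimit

variable {L : C} {p : ∀ n, L ⟶ D n} (hl : IsTowerLimit d p)
include hl

noncomputable def lift {X : C} (q : ∀ n, X ⟶ D n) (hq : IsTowerCone d q) : X ⟶ L :=
  (hl X q hq).exists.choose

theorem lift_comp {X : C} (q : ∀ n, X ⟶ D n) (hq : IsTowerCone d q) (n : ℕ) :
    hl.lift q hq ≫ p n = q n :=
  (hl X q hq).exists.choose_spec n

theorem eq_lift {X : C} {q : ∀ n, X ⟶ D n} (hq : IsTowerCone d q) {m : X ⟶ L}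
    (hm : ∀ n, m ≫ p n = q n) : m = hl.lift q hq :=
  (hl X q hq).unique hm (hl.lift_comp q hq)

theorem hom_ext (hp : IsTowerCone d p) {X : C} {m m' : X ⟶ L}
    (h : ∀ n, m ≫ p n = m' ≫ p n) : m = m' :=
  (hl X _ (hp.precomp m')).unique h (fun _ => rfl)

theorem hom_ext_succ (hp : IsTowerCone d p) {X : C} {m m' : X ⟶ L}
    (h : ∀ n, m ≫ p (n + 1) = m' ≫ p (n + 1)) : m = m' :=
  hl.hom_ext hp fun n => by rw [← hp n, ← Category.assoc, h n, Category.assoc]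

end IsTowerLimit

end Tower

section FinalCoalgebra

variable {F : C ⥤ C} {T : C} {t : F.obj T ⟶ T}

def coalgebraCone {X : C} (c : X ⟶ F.obj X) (x₀ : X ⟶ T) : ∀ n, X ⟶ chainObj F T n
  | 0 => x₀
  | n + 1 => c ≫ F.map (coalgebraCone c x₀ n)

theorem isTowerCone_coalgebraCone (hT : IsTerminal T) {X : C} (c : X ⟶ F.obj X) (x₀ : X ⟶ T) :
    IsTowerCone (chainMap F T t) (coalgebraCone c x₀)
  | 0 => hT.hom_ext _ _
  | n + 1 => by
    change (c ≫ F.map _) ≫ F.map _ = c ≫ F.map _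
    rw [Category.assoc, ← F.map_comp, isTowerCone_coalgebraCone hT c x₀ n]

variable {L : C} {p : ∀ n, L ⟶ chainObj F T n} {l : L ⟶ F.obj L}
  (hl : ∀ n, l ≫ F.map (p n) = p (n + 1))
include hl

theorem comp_eq_coalgebraCone {X : C} {c : X ⟶ F.obj X} {h : X ⟶ L}
    (hh : c ≫ F.map h = h ≫ l) : ∀ n, h ≫ p n = coalgebraCone (T := T) c (h ≫ p 0) n
  | 0 => rfl
  | n + 1 => by
    change h ≫ p (n + 1) = c ≫ F.map (coalgebraCone (T := T) c (h ≫ p 0) n)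
    rw [← comp_eq_coalgebraCone hh n, F.map_comp, ← Category.assoc, hh, Category.assoc]
    exact congrArg (h ≫ ·) (hl n).symm

variable (hp : IsTowerCone (chainMap F T t) p) (hlim : IsTowerLimit (chainMap F T t) p)
  (hpres : IsTowerLimit (D := fun n => F.obj (chainObj F T n))
    (fun n => F.map (chainMap F T t n)) (fun n => F.map (p n)))
include hp hlim hpres

theorem isIso_of_comp_map_eq : IsIso l := by
  have hk : IsTowerCone (chainMap F T t) (towerExtend (chainMap F T t) fun n => F.map (p n)) :=
    (hp.map F).towerExtend
  let k := hlim.lift _ hk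
  have hkp (n : ℕ) : k ≫ p (n + 1) = F.map (p n) := hlim.lift_comp _ hk (n + 1)
  refine ⟨k, hlim.hom_ext_succ hp fun n => ?_, hpres.hom_ext (hp.map F) fun n => ?_⟩
  · rw [Category.assoc, hkp, Category.id_comp]
    exact hl n
  · rw [Category.assoc, hl, Category.id_comp]
    exact hkp n

theorem existsUnique_coalgebra_hom (hT : IsTerminal T) (X : C) (c : X ⟶ F.obj X) :
    ∃! h : X ⟶ L, c ≫ F.map h = h ≫ l := by
  have hq := isTowerCone_coalgebraCone (t := t) hT c (hT.from X)
  refine ⟨hlim.lift _ hq, hpres.hom_ext (hp.map F) fun n => ?_, fun h hh => hlim.eq_lift hq ?_⟩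
  · rw [Category.assoc, Category.assoc, hl, ← F.map_comp, hlim.lift_comp]
    exact (hlim.lift_comp _ hq (n + 1)).symm
  · intro n
    exact (comp_eq_coalgebraCone hl hh n).trans (congrArg (coalgebraCone c · n) (hT.hom_ext _ _))

end FinalCoalgebra

/-- If `T` is terminal, the chain `T ← FT ← F²T ← ⋯` has a limit `(L, p)` and
`F` preserves this limit, then the canonical comparison map `L ⟶ F L` is an
isomorphism making `L` a final `F`-coalgebra. -/
theorem stmt_19 (F : C ⥤ C) (T : C)
    (hT : ∀ X : C, ∃! _ : X ⟶ T, True)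
    (t : F.obj T ⟶ T)
    (L : C) (p : ∀ n : ℕ, L ⟶ chainObj F T n)
    (hp : ∀ n : ℕ, p (n + 1) ≫ chainMap F T t n = p n)
    (hlim : ∀ (X : C) (q : ∀ n : ℕ, X ⟶ chainObj F T n),
      (∀ n : ℕ, q (n + 1) ≫ chainMap F T t n = q n) →
      ∃! m : X ⟶ L, ∀ n : ℕ, m ≫ p n = q n)
    (hpres : ∀ (X : C) (q : ∀ n : ℕ, X ⟶ F.obj (chainObj F T n)),
      (∀ n : ℕ, q (n + 1) ≫ F.map (chainMap F T t n) = q n) →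
      ∃! m : X ⟶ F.obj L, ∀ n : ℕ, m ≫ F.map (p n) = q n) :
    ∃ l : L ⟶ F.obj L,
      (∀ n : ℕ, l ≫ F.map (p n) = p (n + 1)) ∧
      IsIso l ∧
      ∀ (X : C) (c : X ⟶ F.obj X), ∃! h : X ⟶ L, c ≫ F.map h = h ≫ l := by
  have hTerm : IsTerminal T :=
    IsTerminal.ofUniqueHom (fun X => (hT X).exists.choose) fun X m => (hT X).unique trivial trivial
  obtain ⟨l, hl, -⟩ := hpres L (fun n => p (n + 1)) (IsTowerCone.succ hp)
  exact ⟨l, hl, isIso_of_comp_map_eq hl hp hlim hpres,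
    existsUnique_coalgebra_hom hl hp hlim hpres hTerm⟩
end
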